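/- arXiv:2505.23541 — 5 statements merged into one kernel-verified Lean document; each statement's English description precedes it below -/
import Mathlib

section
/- Let ν be a measure on (Θ, Σ), let μ1, μ2 be probability measures on Θ with μ_i ≪ ν for i = 1, 2, and let Φ : Θ → ℝ be measurable with 0 < Z_{Φ,μ_i} < ∞ for i = 1, 2 (note that exp(−Φ) > 0 everywhere since Φ is real-valued). Then the posteriors coincide, (μ1)_Φ = (μ2)_Φ, if and only if μ1 = μ2. -/
/-! Each posterior is the rescaled prior `Z_{Φ,μᵢ}⁻¹ • μᵢ` reweighted by the same density
`exp (-Φ)`, which is everywhere positive and finite and can therefore be divided out. Equal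
posteriors thus give `Z_{Φ,μ₁}⁻¹ • μ₁ = Z_{Φ,μ₂}⁻¹ • μ₂`, and comparing total masses of the
probability measures `μᵢ` forces the scalars, hence the priors, to agree. -/

open MeasureTheory Real

namespace PaperStmt

variable {Θ : Type*}

/-- The evidence `Z_{Φ,μ} = ∫ exp (-Φ) dμ`. -/
noncomputable def evid [MeasurableSpace Θ] (μ : Measure Θ) (Φ : Θ → ℝ) : ℝ :=
  ∫ θ, Real.exp (-(Φ θ)) ∂μ

/-- The posterior `μ_Φ`, with density `exp (-Φ) / Z_{Φ,μ}` with respect to `μ`. -/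
noncomputable def post [MeasurableSpace Θ] (μ : Measure Θ) (Φ : Θ → ℝ) : Measure Θ :=
  μ.withDensity fun θ => ENNReal.ofReal (Real.exp (-(Φ θ)) / evid μ Φ)

section

open scoped ENNReal

variable {α : Type*} [MeasurableSpace α]

theorem eq_of_withDensity_eq {μ ν : Measure α} {f : α → ℝ≥0∞} (hf : Measurable f)
    (hf_ne_zero : ∀ x, f x ≠ 0) (hf_ne_top : ∀ x, f x ≠ ∞)
    (h : μ.withDensity f = ν.withDensity f) : μ = ν := by
  rw [← withDensity_inv_same hf (ae_of_all μ hf_ne_zero) (ae_of_all μ hf_ne_top), h,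
    withDensity_inv_same hf (ae_of_all ν hf_ne_zero) (ae_of_all ν hf_ne_top)]

theorem eq_of_smul_eq_smul_of_isProbabilityMeasure {μ ν : Measure α}
    [IsProbabilityMeasure μ] [IsProbabilityMeasure ν] {a b : ℝ≥0∞}
    (ha_ne_zero : a ≠ 0) (ha_ne_top : a ≠ ∞) (h : a • μ = b • ν) : μ = ν := by
  obtain rfl : a = b := by simpa using congrArg (· Set.univ) h
  ext s
  exact (ENNReal.mul_right_inj ha_ne_zero ha_ne_top).1 (by simpa using congrArg (· s) h)

end

theorem post_eq_withDensity_smul [MeasurableSpace Θ] (μ : Measure Θ) (Φ : Θ → ℝ)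
    (hZ : 0 < evid μ Φ) :
    post μ Φ = ((ENNReal.ofReal (evid μ Φ))⁻¹ • μ).withDensity
      fun θ => ENNReal.ofReal (Real.exp (-(Φ θ))) := by
  rw [withDensity_smul_measure, ← withDensity_smul' _ _ (by simpa using hZ), post]
  congr 1
  funext θ
  rw [ENNReal.ofReal_div_of_pos hZ, div_eq_mul_inv, mul_comm]
  rfl

theorem stmt1_general [MeasurableSpace Θ] (μ1 μ2 : Measure Θ)
    [IsProbabilityMeasure μ1] [IsProbabilityMeasure μ2]
    (Φ : Θ → ℝ) (hΦ : Measurable Φ)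
    (hZ1 : 0 < evid μ1 Φ) (hZ2 : 0 < evid μ2 Φ) :
    post μ1 Φ = post μ2 Φ ↔ μ1 = μ2 := by
  refine ⟨fun h => ?_, fun h => h ▸ rfl⟩
  rw [post_eq_withDensity_smul μ1 Φ hZ1, post_eq_withDensity_smul μ2 Φ hZ2] at h
  have hscaled := eq_of_withDensity_eq hΦ.neg.exp.ennreal_ofReal
    (fun θ => ENNReal.ofReal_ne_zero_iff.2 (Real.exp_pos _)) (fun _ => ENNReal.ofReal_ne_top) h
  exact eq_of_smul_eq_smul_of_isProbabilityMeasure (by simp) (by simpa using hZ1) hscaled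

/-- if `μ1, μ2 ≪ ν` are probability measures and `Φ` is a real-valued
measurable misfit with finite positive evidence for both priors, then the posteriors
coincide iff the priors coincide. -/
theorem stmt1 [MeasurableSpace Θ] (ν μ1 μ2 : Measure Θ)
    [IsProbabilityMeasure μ1] [IsProbabilityMeasure μ2]
    (hac1 : μ1 ≪ ν) (hac2 : μ2 ≪ ν)
    (Φ : Θ → ℝ) (hΦ : Measurable Φ)
    (hint1 : Integrable (fun θ => Real.exp (-(Φ θ))) μ1)
    (hint2 : Integrable (fun θ => Real.exp (-(Φ θ))) μ2)
    (hZ1 : 0 < evid μ1 Φ) (hZ2 : 0 < evid μ2 Φ) :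
    post μ1 Φ = post μ2 Φ ↔ μ1 = μ2 :=
  stmt1_general μ1 μ2 Φ hΦ hZ1 hZ2

end PaperStmt
end

section
/- Let μ be a probability measure on (Θ, Σ) and let Φ1, Φ2 : Θ → [0, ∞) be μ-integrable with 0 < Z_{Φi,μ} < ∞ for i = 1, 2. Then d_TV(μ_{Φ1}, μ_{Φ2}) ≤ (1/2) · (min(Z_{Φ1,μ}, Z_{Φ2,μ}))⁻¹ · ‖Φ1 − Φ2 + log(Z_{Φ1,μ}/Z_{Φ2,μ})‖_{L¹_μ}. Moreover, if Φ1 − Φ2 is μ-almost surely constant then equality holds (both sides are zero). -/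
open MeasureTheory Real

namespace PaperStmt

variable {Θ : Type*}

lemma abs_exp_sub_exp (a b : ℝ) :
    |Real.exp (-a) - Real.exp (-b)| ≤ Real.exp (-(min a b)) * |a - b| := by
  wlog h : a ≤ b generalizing a b
  · rw [abs_sub_comm, min_comm, abs_sub_comm a b]
    exact this b a (le_of_not_ge h)
  rw [min_eq_left h, abs_of_nonneg (sub_nonneg.2 (Real.exp_le_exp.2 (neg_le_neg h))),
    abs_of_nonpos (sub_nonpos.2 h)]
  have hb : Real.exp (-b) = Real.exp (-a) * Real.exp (a - b) := by
    rw [← Real.exp_add]; ring_nf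
  rw [hb]
  nlinarith [Real.add_one_le_exp (a - b), Real.exp_pos (-a)]

/-- total variation upper bound for misfit perturbations, where
`d_TV(μ_{Φ1}, μ_{Φ2}) = (1/2) ∫ |ℓ_{Φ1,μ} - ℓ_{Φ2,μ}| dμ`; equality holds when
`Φ1 - Φ2` is `μ`-a.s. constant. -/
theorem stmt2 [MeasurableSpace Θ] (μ : Measure Θ) [IsProbabilityMeasure μ]
    (Φ1 Φ2 : Θ → ℝ) (hm1 : Measurable Φ1) (hm2 : Measurable Φ2)
    (hnn1 : ∀ θ, 0 ≤ Φ1 θ) (hnn2 : ∀ θ, 0 ≤ Φ2 θ)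
    (hi1 : Integrable Φ1 μ) (hi2 : Integrable Φ2 μ)
    (hint1 : Integrable (fun θ => Real.exp (-(Φ1 θ))) μ)
    (hint2 : Integrable (fun θ => Real.exp (-(Φ2 θ))) μ)
    (hZ1 : 0 < evid μ Φ1) (hZ2 : 0 < evid μ Φ2) :
    (1 / 2) * ∫ θ, |Real.exp (-(Φ1 θ)) / evid μ Φ1 - Real.exp (-(Φ2 θ)) / evid μ Φ2| ∂μ
      ≤ (1 / 2) * (min (evid μ Φ1) (evid μ Φ2))⁻¹
          * ∫ θ, |Φ1 θ - Φ2 θ + Real.log (evid μ Φ1 / evid μ Φ2)| ∂μ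
    ∧ ((∃ c : ℝ, ∀ᵐ θ ∂μ, Φ1 θ - Φ2 θ = c) →
        (1 / 2) * ∫ θ, |Real.exp (-(Φ1 θ)) / evid μ Φ1 - Real.exp (-(Φ2 θ)) / evid μ Φ2| ∂μ
          = (1 / 2) * (min (evid μ Φ1) (evid μ Φ2))⁻¹
              * ∫ θ, |Φ1 θ - Φ2 θ + Real.log (evid μ Φ1 / evid μ Φ2)| ∂μ) := by
  set Z1 := evid μ Φ1 with hZ1def
  set Z2 := evid μ Φ2 with hZ2def
  have hmin : 0 < min Z1 Z2 := lt_min hZ1 hZ2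
  constructor
  · -- inequality
    have key : ∀ θ, |Real.exp (-(Φ1 θ)) / Z1 - Real.exp (-(Φ2 θ)) / Z2|
        ≤ (min Z1 Z2)⁻¹ * |Φ1 θ - Φ2 θ + Real.log (Z1 / Z2)| := by
      intro θ
      have e1 : Real.exp (-(Φ1 θ)) / Z1 = Real.exp (-(Φ1 θ + Real.log Z1)) := by
        rw [neg_add, Real.exp_add, Real.exp_neg (Real.log Z1), Real.exp_log hZ1]; ring
      have e2 : Real.exp (-(Φ2 θ)) / Z2 = Real.exp (-(Φ2 θ + Real.log Z2)) := by
        rw [neg_add, Real.exp_add, Real.exp_neg (Real.log Z2), Real.exp_log hZ2]; ring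
      rw [e1, e2]
      have habs : (Φ1 θ + Real.log Z1) - (Φ2 θ + Real.log Z2)
          = Φ1 θ - Φ2 θ + Real.log (Z1 / Z2) := by
        rw [Real.log_div hZ1.ne' hZ2.ne']; ring
      calc |Real.exp (-(Φ1 θ + Real.log Z1)) - Real.exp (-(Φ2 θ + Real.log Z2))|
          ≤ Real.exp (-(min (Φ1 θ + Real.log Z1) (Φ2 θ + Real.log Z2)))
            * |(Φ1 θ + Real.log Z1) - (Φ2 θ + Real.log Z2)| := abs_exp_sub_exp _ _
        _ ≤ (min Z1 Z2)⁻¹ * |Φ1 θ - Φ2 θ + Real.log (Z1 / Z2)| := by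
            rw [habs]
            apply mul_le_mul_of_nonneg_right _ (abs_nonneg _)
            have hl : Real.log (min Z1 Z2) ≤ min (Φ1 θ + Real.log Z1) (Φ2 θ + Real.log Z2) :=
              le_min
                (le_add_of_nonneg_of_le (hnn1 θ) (Real.log_le_log hmin (min_le_left _ _)))
                (le_add_of_nonneg_of_le (hnn2 θ) (Real.log_le_log hmin (min_le_right _ _)))
            calc Real.exp (-(min (Φ1 θ + Real.log Z1) (Φ2 θ + Real.log Z2)))
                ≤ Real.exp (-(Real.log (min Z1 Z2))) := Real.exp_le_exp.2 (neg_le_neg hl)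
              _ = (min Z1 Z2)⁻¹ := by rw [Real.exp_neg, Real.exp_log hmin]
    have hIL : Integrable (fun θ => |Real.exp (-(Φ1 θ)) / Z1 - Real.exp (-(Φ2 θ)) / Z2|) μ :=
      ((hint1.div_const Z1).sub (hint2.div_const Z2)).abs
    have hIR : Integrable (fun θ => |Φ1 θ - Φ2 θ + Real.log (Z1 / Z2)|) μ :=
      ((hi1.sub hi2).add (integrable_const _)).abs
    have hint : (∫ θ, |Real.exp (-(Φ1 θ)) / Z1 - Real.exp (-(Φ2 θ)) / Z2| ∂μ)
        ≤ (min Z1 Z2)⁻¹ * ∫ θ, |Φ1 θ - Φ2 θ + Real.log (Z1 / Z2)| ∂μ := by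
      rw [← integral_const_mul]
      exact integral_mono hIL (hIR.const_mul _) key
    calc (1 / 2) * ∫ θ, |Real.exp (-(Φ1 θ)) / Z1 - Real.exp (-(Φ2 θ)) / Z2| ∂μ
        ≤ (1 / 2) * ((min Z1 Z2)⁻¹ * ∫ θ, |Φ1 θ - Φ2 θ + Real.log (Z1 / Z2)| ∂μ) := by
          linarith
      _ = (1 / 2) * (min Z1 Z2)⁻¹ * ∫ θ, |Φ1 θ - Φ2 θ + Real.log (Z1 / Z2)| ∂μ := by ring
  · rintro ⟨c, hc⟩
    have hZ : Z1 = Real.exp (-c) * Z2 := by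
      have hae : ∀ᵐ θ ∂μ, Real.exp (-(Φ1 θ)) = Real.exp (-c) * Real.exp (-(Φ2 θ)) :=
        hc.mono fun θ h => by rw [← Real.exp_add]; congr 1; linarith
      calc Z1 = ∫ θ, Real.exp (-c) * Real.exp (-(Φ2 θ)) ∂μ := integral_congr_ae hae
        _ = Real.exp (-c) * Z2 := integral_const_mul _ _
    have hlogc : Real.log (Z1 / Z2) = -c := by
      rw [hZ, mul_div_assoc, div_self hZ2.ne', mul_one, Real.log_exp]
    have hR : (∫ θ, |Φ1 θ - Φ2 θ + Real.log (Z1 / Z2)| ∂μ) = 0 := by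
      have hae : ∀ᵐ θ ∂μ, |Φ1 θ - Φ2 θ + Real.log (Z1 / Z2)| = 0 := by
        filter_upwards [hc] with θ h
        simp [hlogc, h]
      rw [integral_congr_ae hae, integral_zero]
    have hL : (∫ θ, |Real.exp (-(Φ1 θ)) / Z1 - Real.exp (-(Φ2 θ)) / Z2| ∂μ) = 0 := by
      have hae : ∀ᵐ θ ∂μ,
          |Real.exp (-(Φ1 θ)) / Z1 - Real.exp (-(Φ2 θ)) / Z2| = 0 := by
        filter_upwards [hc] with θ h
        have : Real.exp (-(Φ1 θ)) = Real.exp (-c) * Real.exp (-(Φ2 θ)) := by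
          rw [← Real.exp_add]; congr 1; linarith
        rw [this, hZ, mul_div_mul_left _ _ (Real.exp_ne_zero _)]
        simp
      rw [integral_congr_ae hae, integral_zero]
    rw [hL, hR]
    ring

end PaperStmt
end

section
/- Let μ be a probability measure on (Θ, Σ) and let Φ1, Φ2 : Θ → ℝ be μ-essentially bounded measurable functions with 0 < Z_{Φi,μ} < ∞ for i = 1, 2. Then d_TV(μ_{Φ1}, μ_{Φ2}) ≥ (1/2) · min( exp(−‖Φ1‖_{L^∞_μ})/Z_{Φ1,μ}, exp(−‖Φ2‖_{L^∞_μ})/Z_{Φ2,μ} ) · ‖Φ1 − Φ2 + log(Z_{Φ1,μ}/Z_{Φ2,μ})‖_{L¹_μ}. Moreover, if Φ1 − Φ2 is μ-almost surely constant then equality holds (both sides are zero). -/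
/-!
With `ℓᵢ = exp (-Φᵢ) / Zᵢ` one has `Φ₁ - Φ₂ + log (Z₁ / Z₂) = -(log ℓ₁ - log ℓ₂)`, and concavity
of `log` (`log x ≤ x - 1`) gives `min ℓ₁ ℓ₂ * |log ℓ₁ - log ℓ₂| ≤ |ℓ₁ - ℓ₂|` pointwise. Since
`ℓᵢ ≥ exp (-‖Φᵢ‖_∞) / Zᵢ` almost everywhere, integrating yields the bound. If `Φ₁ - Φ₂ = c`
almost everywhere then `Z₁ = exp (-c) * Z₂`, so `ℓ₁ = ℓ₂` and both sides vanish.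
-/

open MeasureTheory Real

namespace PaperStmt

variable {Θ : Type*}

theorem _root_.Real.min_mul_abs_log_sub_log_le {p q : ℝ} (hp : 0 < p) (hq : 0 < q) :
    min p q * |log p - log q| ≤ |p - q| := by
  wlog hqp : q ≤ p generalizing p q
  · simpa only [min_comm, abs_sub_comm] using this hq hp (le_of_not_ge hqp)
  have hlog : log q ≤ log p := log_le_log hq hqp
  rw [min_eq_right hqp, abs_of_nonneg (sub_nonneg.2 hlog), abs_of_nonneg (sub_nonneg.2 hqp),
    ← log_div hp.ne' hq.ne']
  calc q * log (p / q) ≤ q * (p / q - 1) :=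
        mul_le_mul_of_nonneg_left (log_le_sub_one_of_pos (div_pos hp hq)) hq.le
    _ = p - q := by field_simp

theorem log_exp_neg_div_sub_log_exp_neg_div (a b : ℝ) {Z₁ Z₂ : ℝ} (hZ₁ : 0 < Z₁) (hZ₂ : 0 < Z₂) :
    log (exp (-a) / Z₁) - log (exp (-b) / Z₂) = -(a - b + log (Z₁ / Z₂)) := by
  rw [log_div (exp_ne_zero _) hZ₁.ne', log_div (exp_ne_zero _) hZ₂.ne',
    log_div hZ₁.ne' hZ₂.ne', log_exp, log_exp]
  ring

section Measure

variable [MeasurableSpace Θ] {μ : Measure Θ}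

theorem ae_abs_le_essSup_abs {f : Θ → ℝ} (hf : MemLp f ⊤ μ) :
    ∀ᵐ θ ∂μ, |f θ| ≤ essSup (fun θ => |f θ|) μ := by
  have hfin : eLpNormEssSup f μ ≠ ⊤ := by
    simpa only [eLpNorm_exponent_top] using hf.eLpNorm_ne_top
  have hbdd : ∀ᵐ θ ∂μ, |f θ| ≤ (eLpNormEssSup f μ).toReal := by
    filter_upwards [ae_le_eLpNormEssSup (f := f) (μ := μ)] with θ hθ
    simpa [Real.norm_eq_abs] using ENNReal.toReal_mono hfin hθ
  exact ae_le_essSup (Filter.isBoundedUnder_of_eventually_le hbdd)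

theorem ae_exp_neg_essSup_div_le {f : Θ → ℝ} (hf : MemLp f ⊤ μ) {Z : ℝ} (hZ : 0 ≤ Z) :
    ∀ᵐ θ ∂μ, exp (-essSup (fun θ => |f θ|) μ) / Z ≤ exp (-f θ) / Z := by
  filter_upwards [ae_abs_le_essSup_abs hf] with θ hθ
  gcongr
  linarith [le_abs_self (f θ)]

theorem ae_min_mul_abs_sub_le_abs_likelihood_sub {Φ₁ Φ₂ : Θ → ℝ}
    (hb₁ : MemLp Φ₁ ⊤ μ) (hb₂ : MemLp Φ₂ ⊤ μ) (hZ₁ : 0 < evid μ Φ₁) (hZ₂ : 0 < evid μ Φ₂) :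
    ∀ᵐ θ ∂μ, min (exp (-essSup (fun θ => |Φ₁ θ|) μ) / evid μ Φ₁)
        (exp (-essSup (fun θ => |Φ₂ θ|) μ) / evid μ Φ₂)
        * |Φ₁ θ - Φ₂ θ + log (evid μ Φ₁ / evid μ Φ₂)|
      ≤ |exp (-Φ₁ θ) / evid μ Φ₁ - exp (-Φ₂ θ) / evid μ Φ₂| := by
  filter_upwards [ae_exp_neg_essSup_div_le hb₁ hZ₁.le, ae_exp_neg_essSup_div_le hb₂ hZ₂.le]
    with θ h₁ h₂
  calc _ ≤ min (exp (-Φ₁ θ) / evid μ Φ₁) (exp (-Φ₂ θ) / evid μ Φ₂)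
          * |Φ₁ θ - Φ₂ θ + log (evid μ Φ₁ / evid μ Φ₂)| := by gcongr
    _ = min (exp (-Φ₁ θ) / evid μ Φ₁) (exp (-Φ₂ θ) / evid μ Φ₂)
          * |log (exp (-Φ₁ θ) / evid μ Φ₁) - log (exp (-Φ₂ θ) / evid μ Φ₂)| := by
        rw [log_exp_neg_div_sub_log_exp_neg_div _ _ hZ₁ hZ₂, abs_neg]
    _ ≤ _ := min_mul_abs_log_sub_log_le (by positivity) (by positivity)

theorem evid_eq_exp_neg_mul_evid {Φ₁ Φ₂ : Θ → ℝ} {c : ℝ} (hc : ∀ᵐ θ ∂μ, Φ₁ θ - Φ₂ θ = c) :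
    evid μ Φ₁ = exp (-c) * evid μ Φ₂ := by
  rw [evid, evid, ← integral_const_mul]
  refine integral_congr_ae ?_
  filter_upwards [hc] with θ hθ
  rw [← exp_add]
  congr 1
  linarith

theorem ae_likelihood_eq_of_ae_sub_eq {Φ₁ Φ₂ : Θ → ℝ} {c : ℝ}
    (hc : ∀ᵐ θ ∂μ, Φ₁ θ - Φ₂ θ = c) :
    ∀ᵐ θ ∂μ, exp (-Φ₁ θ) / evid μ Φ₁ = exp (-Φ₂ θ) / evid μ Φ₂ := by
  filter_upwards [hc] with θ hθ
  rw [evid_eq_exp_neg_mul_evid hc, show -Φ₁ θ = -c + -Φ₂ θ by linarith, exp_add,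
    mul_div_mul_left _ _ (exp_ne_zero _)]

theorem log_evid_div_evid_of_ae_sub_eq {Φ₁ Φ₂ : Θ → ℝ} {c : ℝ}
    (hc : ∀ᵐ θ ∂μ, Φ₁ θ - Φ₂ θ = c) (hZ₂ : 0 < evid μ Φ₂) :
    log (evid μ Φ₁ / evid μ Φ₂) = -c := by
  rw [evid_eq_exp_neg_mul_evid hc, mul_div_assoc, div_self hZ₂.ne', mul_one, log_exp]

end Measure

theorem stmt3_general [MeasurableSpace Θ] (μ : Measure Θ) [IsProbabilityMeasure μ]
    (Φ1 Φ2 : Θ → ℝ)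
    (hb1 : MemLp Φ1 ⊤ μ) (hb2 : MemLp Φ2 ⊤ μ)
    (hint1 : Integrable (fun θ => Real.exp (-(Φ1 θ))) μ)
    (hint2 : Integrable (fun θ => Real.exp (-(Φ2 θ))) μ)
    (hZ1 : 0 < evid μ Φ1) (hZ2 : 0 < evid μ Φ2) :
    (1 / 2) * min (Real.exp (-essSup (fun θ => |Φ1 θ|) μ) / evid μ Φ1)
              (Real.exp (-essSup (fun θ => |Φ2 θ|) μ) / evid μ Φ2)
          * ∫ θ, |Φ1 θ - Φ2 θ + Real.log (evid μ Φ1 / evid μ Φ2)| ∂μ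
      ≤ (1 / 2) * ∫ θ, |Real.exp (-(Φ1 θ)) / evid μ Φ1 - Real.exp (-(Φ2 θ)) / evid μ Φ2| ∂μ
    ∧ ((∃ c : ℝ, ∀ᵐ θ ∂μ, Φ1 θ - Φ2 θ = c) →
        (1 / 2) * min (Real.exp (-essSup (fun θ => |Φ1 θ|) μ) / evid μ Φ1)
              (Real.exp (-essSup (fun θ => |Φ2 θ|) μ) / evid μ Φ2)
            * ∫ θ, |Φ1 θ - Φ2 θ + Real.log (evid μ Φ1 / evid μ Φ2)| ∂μ
          = (1 / 2) * ∫ θ, |Real.exp (-(Φ1 θ)) / evid μ Φ1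
              - Real.exp (-(Φ2 θ)) / evid μ Φ2| ∂μ) := by
  refine ⟨?_, fun ⟨c, hc⟩ => ?_⟩
  · rw [mul_assoc, ← integral_const_mul]
    gcongr _ * ?_
    refine integral_mono_ae ?_ ?_ (ae_min_mul_abs_sub_le_abs_likelihood_sub hb1 hb2 hZ1 hZ2)
    · exact (((hb1.integrable le_top).sub (hb2.integrable le_top)).add
        (integrable_const _)).abs.const_mul _
    · exact ((hint1.div_const _).sub (hint2.div_const _)).abs
  · have hlog := log_evid_div_evid_of_ae_sub_eq hc hZ2
    have hlik := ae_likelihood_eq_of_ae_sub_eq hc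
    rw [integral_eq_zero_of_ae, integral_eq_zero_of_ae]
    · simp
    · filter_upwards [hlik] with θ hθ
      simp [hθ]
    · filter_upwards [hc] with θ hθ
      simp [hθ, hlog]

/-- total variation lower bound for misfit perturbations with
`μ`-essentially bounded misfits, where
`d_TV(μ_{Φ1}, μ_{Φ2}) = (1/2) ∫ |ℓ_{Φ1,μ} - ℓ_{Φ2,μ}| dμ` and
`‖Φ‖_{L^∞_μ}` is the `μ`-essential supremum of `|Φ|`; equality holds when
`Φ1 - Φ2` is `μ`-a.s. constant. -/
theorem stmt3 [MeasurableSpace Θ] (μ : Measure Θ) [IsProbabilityMeasure μ]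
    (Φ1 Φ2 : Θ → ℝ) (hm1 : Measurable Φ1) (hm2 : Measurable Φ2)
    (hb1 : MemLp Φ1 ⊤ μ) (hb2 : MemLp Φ2 ⊤ μ)
    (hint1 : Integrable (fun θ => Real.exp (-(Φ1 θ))) μ)
    (hint2 : Integrable (fun θ => Real.exp (-(Φ2 θ))) μ)
    (hZ1 : 0 < evid μ Φ1) (hZ2 : 0 < evid μ Φ2) :
    (1 / 2) * min (Real.exp (-essSup (fun θ => |Φ1 θ|) μ) / evid μ Φ1)
              (Real.exp (-essSup (fun θ => |Φ2 θ|) μ) / evid μ Φ2)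
          * ∫ θ, |Φ1 θ - Φ2 θ + Real.log (evid μ Φ1 / evid μ Φ2)| ∂μ
      ≤ (1 / 2) * ∫ θ, |Real.exp (-(Φ1 θ)) / evid μ Φ1 - Real.exp (-(Φ2 θ)) / evid μ Φ2| ∂μ
    ∧ ((∃ c : ℝ, ∀ᵐ θ ∂μ, Φ1 θ - Φ2 θ = c) →
        (1 / 2) * min (Real.exp (-essSup (fun θ => |Φ1 θ|) μ) / evid μ Φ1)
              (Real.exp (-essSup (fun θ => |Φ2 θ|) μ) / evid μ Φ2)
            * ∫ θ, |Φ1 θ - Φ2 θ + Real.log (evid μ Φ1 / evid μ Φ2)| ∂μ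
          = (1 / 2) * ∫ θ, |Real.exp (-(Φ1 θ)) / evid μ Φ1
              - Real.exp (-(Φ2 θ)) / evid μ Φ2| ∂μ) :=
  stmt3_general μ Φ1 Φ2 hb1 hb2 hint1 hint2 hZ1 hZ2

end PaperStmt
end

section
/- Let μ be a probability measure on (Θ, Σ) and let Φ1, Φ2 : Θ → ℝ be μ-essentially bounded measurable functions with 0 < Z_{Φi,μ} < ∞ for i = 1, 2, and suppose both μ(Φ1 − Φ2 > 0) > 0 and μ(Φ1 − Φ2 < 0) > 0. Then the following strict lower bounds hold: if Z_{Φ1,μ} = Z_{Φ2,μ}, then d_TV(μ_{Φ1}, μ_{Φ2}) > (1/2) · min(exp(−‖Φ1‖_{L^∞_μ}), exp(−‖Φ2‖_{L^∞_μ})) / min(Z_{Φ1,μ}, Z_{Φ2,μ}) · ‖Φ1 − Φ2‖_{L¹_μ}; if Z_{Φ1,μ} > Z_{Φ2,μ}, then d_TV(μ_{Φ1}, μ_{Φ2}) > exp(−‖Φ1‖_{L^∞_μ}) · Z_{Φ2,μ}⁻¹ · ∫_{{Φ1 > Φ2}} |Φ1 − Φ2| dμ; if Z_{Φ1,μ}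 < Z_{Φ2,μ}, then d_TV(μ_{Φ1}, μ_{Φ2}) > exp(−‖Φ2‖_{L^∞_μ}) · Z_{Φ1,μ}⁻¹ · ∫_{{Φ2 > Φ1}} |Φ1 − Φ2| dμ. -/
open MeasureTheory Real

namespace PaperStmt

variable {Θ : Type*}

/-! For `a < b`, `exp (-a) - exp (-b) = exp (-b) (exp (b - a) - 1) > exp (-b) (b - a)`, and
`exp (-b) ≥ exp (-‖Φ‖_∞)` almost everywhere; this compares `exp (-Φ1) - exp (-Φ2)` pointwise with
`Φ1 - Φ2`, strictly where `Φ1 ≠ Φ2`, which happens on a set of positive measure. For equal evidences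
integrating gives the bound at once. Otherwise, as `ℓ2 - ℓ1` has integral zero, the total variation
distance is `∫ (ℓ2 - ℓ1)⁺ ≥ ∫_{Φ2 < Φ1} (ℓ2 - ℓ1)`, and on `{Φ2 < Φ1}` we have
`ℓ2 - ℓ1 ≥ (exp (-Φ2) - exp (-Φ1)) / Z2` as soon as `Z2 ≤ Z1`. -/

section ExpNeg

theorem mul_sub_lt_exp_neg_sub_exp_neg {a b m : ℝ} (hab : a < b) (hm : m ≤ exp (-b)) :
    m * (b - a) < exp (-a) - exp (-b) :=
  calc m * (b - a) ≤ exp (-b) * (b - a) := mul_le_mul_of_nonneg_right hm (sub_nonneg.2 hab.le)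
    _ < exp (-b) * (exp (b - a) - 1) := by
      refine mul_lt_mul_of_pos_left ?_ (exp_pos _)
      linarith [add_one_lt_exp (sub_ne_zero.2 hab.ne')]
    _ = exp (-a) - exp (-b) := by rw [mul_sub, ← exp_add]; ring_nf

theorem mul_abs_sub_lt_abs_exp_neg_sub_exp_neg {x y m : ℝ} (hxy : x ≠ y)
    (hx : m ≤ exp (-x)) (hy : m ≤ exp (-y)) : m * |x - y| < |exp (-x) - exp (-y)| := by
  wlog h : x < y generalizing x y
  · rw [abs_sub_comm x, abs_sub_comm (exp _)]
    exact this hxy.symm hy hx (lt_of_le_of_ne (not_lt.1 h) hxy.symm)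
  rw [abs_sub_comm, abs_of_pos (sub_pos.2 h)]
  exact (mul_sub_lt_exp_neg_sub_exp_neg h hy).trans_le (le_abs_self _)

theorem mul_abs_sub_le_abs_exp_neg_sub_exp_neg {x y m : ℝ}
    (hx : m ≤ exp (-x)) (hy : m ≤ exp (-y)) : m * |x - y| ≤ |exp (-x) - exp (-y)| := by
  rcases eq_or_ne x y with rfl | hxy
  · simp
  · exact (mul_abs_sub_lt_abs_exp_neg_sub_exp_neg hxy hx hy).le

end ExpNeg

section Integral

variable {α : Type*} [MeasurableSpace α] {μ : Measure α}

theorem ae_abs_le_essSup_of_memLp {f : α → ℝ} (hf : MemLp f ⊤ μ) :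
    ∀ᵐ x ∂μ, |f x| ≤ essSup (fun x => |f x|) μ := by
  have hbdd : Filter.IsBoundedUnder (· ≤ ·) (ae μ) fun x => ‖f x‖₊ :=
    eLpNormEssSup_lt_top_iff_isBoundedUnder.1 (by simpa using hf.eLpNorm_lt_top)
  exact ae_le_essSup (NNReal.coe_mono.isBoundedUnder_le_comp hbdd)

theorem ae_exp_neg_essSup_abs_le_of_memLp {f : α → ℝ} (hf : MemLp f ⊤ μ) :
    ∀ᵐ x ∂μ, exp (-essSup (fun x => |f x|) μ) ≤ exp (-f x) := by
  filter_upwards [ae_abs_le_essSup_of_memLp hf] with x hx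
  exact exp_le_exp.2 (neg_le_neg ((le_abs_self _).trans hx))

theorem integral_lt_integral_of_ae_le_of_ae_lt_on {f g : α → ℝ} {s : Set α}
    (hf : Integrable f μ) (hg : Integrable g μ) (hle : f ≤ᵐ[μ] g)
    (hlt : ∀ᵐ x ∂μ, x ∈ s → f x < g x) (hs : μ s ≠ 0) :
    ∫ x, f x ∂μ < ∫ x, g x ∂μ := by
  rw [← sub_pos, ← integral_sub hg hf,
    integral_pos_iff_support_of_nonneg_ae (hle.mono fun x => sub_nonneg.2) (hg.sub hf)]
  refine pos_iff_ne_zero.2 (mt (measure_mono_null_ae ?_) hs)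
  filter_upwards [hlt] with x hx hxs
  exact (sub_pos.2 (hx hxs)).ne'

theorem setIntegral_le_half_integral_abs_of_integral_eq_zero {f : α → ℝ}
    (hf : Integrable f μ) (h0 : ∫ x, f x ∂μ = 0) (s : Set α) :
    ∫ x in s, f x ∂μ ≤ 1 / 2 * ∫ x, |f x| ∂μ :=
  calc ∫ x in s, f x ∂μ ≤ ∫ x in s, max (f x) 0 ∂μ :=
        integral_mono hf.restrict hf.pos_part.restrict fun x => le_max_left _ _
    _ ≤ ∫ x, max (f x) 0 ∂μ :=
        setIntegral_le_integral hf.pos_part (ae_of_all _ fun x => le_max_right _ _)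
    _ = ∫ x, (|f x| + f x) / 2 ∂μ := by
        congr 1 with x
        rcases le_total (f x) 0 with h | h
        · rw [max_eq_right h, abs_of_nonpos h]; ring
        · rw [max_eq_left h, abs_of_nonneg h]; ring
    _ = 1 / 2 * ∫ x, |f x| ∂μ := by
        rw [integral_div, integral_add hf.abs hf, h0]; ring

end Integral

section Posterior

variable [MeasurableSpace Θ] {μ : Measure Θ} {Φ Φ1 Φ2 : Θ → ℝ}

noncomputable def likelihood (μ : Measure Θ) (Φ : Θ → ℝ) (θ : Θ) : ℝ :=
  exp (-Φ θ) / evid μ Φ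

noncomputable def tvDist (μ : Measure Θ) (Φ1 Φ2 : Θ → ℝ) : ℝ :=
  1 / 2 * ∫ θ, |likelihood μ Φ1 θ - likelihood μ Φ2 θ| ∂μ

theorem tvDist_comm (μ : Measure Θ) (Φ1 Φ2 : Θ → ℝ) : tvDist μ Φ1 Φ2 = tvDist μ Φ2 Φ1 := by
  simp only [tvDist, abs_sub_comm]

theorem integrable_likelihood (hint : Integrable (fun θ => exp (-Φ θ)) μ) :
    Integrable (likelihood μ Φ) μ :=
  hint.div_const _

theorem integral_likelihood (hZ : evid μ Φ ≠ 0) : ∫ θ, likelihood μ Φ θ ∂μ = 1 := by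
  simp only [likelihood]
  rw [integral_div]
  exact div_self hZ

theorem lt_tvDist_of_evid_eq [IsFiniteMeasure μ] (hb1 : MemLp Φ1 ⊤ μ) (hb2 : MemLp Φ2 ⊤ μ)
    (hint1 : Integrable (fun θ => exp (-Φ1 θ)) μ) (hint2 : Integrable (fun θ => exp (-Φ2 θ)) μ)
    (hZ : 0 < evid μ Φ1) (hne : μ {θ | Φ1 θ ≠ Φ2 θ} ≠ 0) (hEq : evid μ Φ1 = evid μ Φ2) :
    1 / 2 * (min (exp (-essSup (fun θ => |Φ1 θ|) μ)) (exp (-essSup (fun θ => |Φ2 θ|) μ))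
        / min (evid μ Φ1) (evid μ Φ2)) * ∫ θ, |Φ1 θ - Φ2 θ| ∂μ < tvDist μ Φ1 Φ2 := by
  set m := min (exp (-essSup (fun θ => |Φ1 θ|) μ)) (exp (-essSup (fun θ => |Φ2 θ|) μ))
  have hm : ∀ᵐ θ ∂μ, m ≤ exp (-Φ1 θ) ∧ m ≤ exp (-Φ2 θ) := by
    filter_upwards [ae_exp_neg_essSup_abs_le_of_memLp hb1,
      ae_exp_neg_essSup_abs_le_of_memLp hb2] with θ h1 h2
    exact ⟨(min_le_left _ _).trans h1, (min_le_right _ _).trans h2⟩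
  have hlt : m * ∫ θ, |Φ1 θ - Φ2 θ| ∂μ < ∫ θ, |exp (-Φ1 θ) - exp (-Φ2 θ)| ∂μ := by
    rw [← integral_const_mul]
    refine integral_lt_integral_of_ae_le_of_ae_lt_on
      ((((hb1.integrable le_top).sub (hb2.integrable le_top)).abs).const_mul m)
      (hint1.sub hint2).abs ?_ ?_ hne
    · filter_upwards [hm] with θ hθ
      exact mul_abs_sub_le_abs_exp_neg_sub_exp_neg hθ.1 hθ.2
    · filter_upwards [hm] with θ hθ hne
      exact mul_abs_sub_lt_abs_exp_neg_sub_exp_neg hne hθ.1 hθ.2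
  have htv : tvDist μ Φ1 Φ2 = 1 / 2 * ((∫ θ, |exp (-Φ1 θ) - exp (-Φ2 θ)| ∂μ) / evid μ Φ1) := by
    simp only [tvDist, likelihood, ← hEq, ← sub_div, abs_div, abs_of_pos hZ, integral_div]
  rw [htv, ← hEq, min_self, mul_assoc, div_mul_eq_mul_div m]
  gcongr

theorem lt_tvDist_of_evid_le [IsFiniteMeasure μ] (hb1 : MemLp Φ1 ⊤ μ) (hb2 : MemLp Φ2 ⊤ μ)
    (hint1 : Integrable (fun θ => exp (-Φ1 θ)) μ) (hint2 : Integrable (fun θ => exp (-Φ2 θ)) μ)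
    (hZ1 : 0 < evid μ Φ1) (hZ2 : 0 < evid μ Φ2) (hgt : μ {θ | Φ2 θ < Φ1 θ} ≠ 0)
    (hZ : evid μ Φ2 ≤ evid μ Φ1) :
    exp (-essSup (fun θ => |Φ1 θ|) μ) * (evid μ Φ2)⁻¹
      * ∫ θ in {θ | Φ2 θ < Φ1 θ}, |Φ1 θ - Φ2 θ| ∂μ < tvDist μ Φ1 Φ2 := by
  set A := {θ | Φ2 θ < Φ1 θ}
  set c := exp (-essSup (fun θ => |Φ1 θ|) μ) * (evid μ Φ2)⁻¹
  have hA : ∀ᵐ θ ∂μ.restrict A, θ ∈ A :=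
    ae_restrict_mem₀ (nullMeasurableSet_lt hb2.aemeasurable hb1.aemeasurable)
  have hpt : ∀ᵐ θ ∂μ.restrict A, c * |Φ1 θ - Φ2 θ| < likelihood μ Φ2 θ - likelihood μ Φ1 θ := by
    filter_upwards [hA, ae_restrict_of_ae (ae_exp_neg_essSup_abs_le_of_memLp hb1)] with θ hθ hm
    rw [abs_of_pos (sub_pos.2 hθ)]
    calc c * (Φ1 θ - Φ2 θ) = exp (-essSup (fun θ => |Φ1 θ|) μ) * (Φ1 θ - Φ2 θ) / evid μ Φ2 := by
          ring
      _ < (exp (-Φ2 θ) - exp (-Φ1 θ)) / evid μ Φ2 := by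
          gcongr; exact mul_sub_lt_exp_neg_sub_exp_neg hθ hm
      _ ≤ likelihood μ Φ2 θ - likelihood μ Φ1 θ := by
          rw [sub_div]; unfold likelihood; gcongr
  have hℓ : Integrable (fun θ => likelihood μ Φ2 θ - likelihood μ Φ1 θ) μ :=
    (integrable_likelihood hint2).sub (integrable_likelihood hint1)
  calc c * ∫ θ in A, |Φ1 θ - Φ2 θ| ∂μ = ∫ θ in A, c * |Φ1 θ - Φ2 θ| ∂μ :=
        (integral_const_mul _ _).symm
    _ < ∫ θ in A, (likelihood μ Φ2 θ - likelihood μ Φ1 θ) ∂μ := by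
        refine integral_lt_integral_of_ae_le_of_ae_lt_on (s := A)
          ((((hb1.integrable le_top).sub (hb2.integrable le_top)).abs).const_mul c).restrict
          hℓ.restrict (hpt.mono fun θ h => h.le) (hpt.mono fun θ h _ => h) ?_
        rwa [Measure.restrict_apply_self]
    _ ≤ 1 / 2 * ∫ θ, |likelihood μ Φ2 θ - likelihood μ Φ1 θ| ∂μ := by
        refine setIntegral_le_half_integral_abs_of_integral_eq_zero hℓ ?_ A
        rw [integral_sub (integrable_likelihood hint2) (integrable_likelihood hint1),
          integral_likelihood hZ2.ne', integral_likelihood hZ1.ne', sub_self]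
    _ = tvDist μ Φ1 Φ2 := tvDist_comm μ Φ2 Φ1

end Posterior

theorem stmt5_general [MeasurableSpace Θ] (μ : Measure Θ) [IsProbabilityMeasure μ]
    (Φ1 Φ2 : Θ → ℝ)
    (hb1 : MemLp Φ1 ⊤ μ) (hb2 : MemLp Φ2 ⊤ μ)
    (hint1 : Integrable (fun θ => Real.exp (-(Φ1 θ))) μ)
    (hint2 : Integrable (fun θ => Real.exp (-(Φ2 θ))) μ)
    (hZ1 : 0 < evid μ Φ1) (hZ2 : 0 < evid μ Φ2)
    (hgt : 0 < μ {θ | Φ2 θ < Φ1 θ}) (hlt : 0 < μ {θ | Φ1 θ < Φ2 θ}) :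
    (evid μ Φ1 = evid μ Φ2 →
      (1 / 2) * (min (Real.exp (-essSup (fun θ => |Φ1 θ|) μ))
            (Real.exp (-essSup (fun θ => |Φ2 θ|) μ))
          / min (evid μ Φ1) (evid μ Φ2))
          * ∫ θ, |Φ1 θ - Φ2 θ| ∂μ
        < (1 / 2) * ∫ θ, |Real.exp (-(Φ1 θ)) / evid μ Φ1
            - Real.exp (-(Φ2 θ)) / evid μ Φ2| ∂μ)
    ∧ (evid μ Φ2 < evid μ Φ1 →
        Real.exp (-essSup (fun θ => |Φ1 θ|) μ) * (evid μ Φ2)⁻¹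
            * ∫ θ in {θ | Φ2 θ < Φ1 θ}, |Φ1 θ - Φ2 θ| ∂μ
          < (1 / 2) * ∫ θ, |Real.exp (-(Φ1 θ)) / evid μ Φ1
              - Real.exp (-(Φ2 θ)) / evid μ Φ2| ∂μ)
    ∧ (evid μ Φ1 < evid μ Φ2 →
        Real.exp (-essSup (fun θ => |Φ2 θ|) μ) * (evid μ Φ1)⁻¹
            * ∫ θ in {θ | Φ1 θ < Φ2 θ}, |Φ1 θ - Φ2 θ| ∂μ
          < (1 / 2) * ∫ θ, |Real.exp (-(Φ1 θ)) / evid μ Φ1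
              - Real.exp (-(Φ2 θ)) / evid μ Φ2| ∂μ) := by
  have hne : μ {θ | Φ1 θ ≠ Φ2 θ} ≠ 0 :=
    (hgt.trans_le (measure_mono fun θ (h : Φ2 θ < Φ1 θ) => h.ne')).ne'
  refine ⟨lt_tvDist_of_evid_eq hb1 hb2 hint1 hint2 hZ1 hne,
    fun hZ => lt_tvDist_of_evid_le hb1 hb2 hint1 hint2 hZ1 hZ2 hgt.ne' hZ.le, fun hZ => ?_⟩
  have h := lt_tvDist_of_evid_le hb2 hb1 hint2 hint1 hZ2 hZ1 hlt.ne' hZ.le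
  rw [tvDist_comm] at h
  simp only [abs_sub_comm (Φ2 _) (Φ1 _)] at h
  exact h

/-- strict total variation lower bounds for misfit perturbations when
`Φ1 - Φ2` changes sign with positive probability, in the three cases
`Z_{Φ1,μ} = Z_{Φ2,μ}`, `Z_{Φ1,μ} > Z_{Φ2,μ}` and `Z_{Φ1,μ} < Z_{Φ2,μ}`. Here
`d_TV(μ_{Φ1}, μ_{Φ2}) = (1/2) ∫ |ℓ_{Φ1,μ} - ℓ_{Φ2,μ}| dμ` and `‖Φ‖_{L^∞_μ}` is the
`μ`-essential supremum of `|Φ|`. -/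
theorem stmt5 [MeasurableSpace Θ] (μ : Measure Θ) [IsProbabilityMeasure μ]
    (Φ1 Φ2 : Θ → ℝ) (hm1 : Measurable Φ1) (hm2 : Measurable Φ2)
    (hb1 : MemLp Φ1 ⊤ μ) (hb2 : MemLp Φ2 ⊤ μ)
    (hint1 : Integrable (fun θ => Real.exp (-(Φ1 θ))) μ)
    (hint2 : Integrable (fun θ => Real.exp (-(Φ2 θ))) μ)
    (hZ1 : 0 < evid μ Φ1) (hZ2 : 0 < evid μ Φ2)
    (hgt : 0 < μ {θ | Φ2 θ < Φ1 θ}) (hlt : 0 < μ {θ | Φ1 θ < Φ2 θ}) :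
    (evid μ Φ1 = evid μ Φ2 →
      (1 / 2) * (min (Real.exp (-essSup (fun θ => |Φ1 θ|) μ))
            (Real.exp (-essSup (fun θ => |Φ2 θ|) μ))
          / min (evid μ Φ1) (evid μ Φ2))
          * ∫ θ, |Φ1 θ - Φ2 θ| ∂μ
        < (1 / 2) * ∫ θ, |Real.exp (-(Φ1 θ)) / evid μ Φ1
            - Real.exp (-(Φ2 θ)) / evid μ Φ2| ∂μ)
    ∧ (evid μ Φ2 < evid μ Φ1 →
        Real.exp (-essSup (fun θ => |Φ1 θ|) μ) * (evid μ Φ2)⁻¹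
            * ∫ θ in {θ | Φ2 θ < Φ1 θ}, |Φ1 θ - Φ2 θ| ∂μ
          < (1 / 2) * ∫ θ, |Real.exp (-(Φ1 θ)) / evid μ Φ1
              - Real.exp (-(Φ2 θ)) / evid μ Φ2| ∂μ)
    ∧ (evid μ Φ1 < evid μ Φ2 →
        Real.exp (-essSup (fun θ => |Φ2 θ|) μ) * (evid μ Φ1)⁻¹
            * ∫ θ in {θ | Φ1 θ < Φ2 θ}, |Φ1 θ - Φ2 θ| ∂μ
          < (1 / 2) * ∫ θ, |Real.exp (-(Φ1 θ)) / evid μ Φ1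
              - Real.exp (-(Φ2 θ)) / evid μ Φ2| ∂μ) :=
  stmt5_general μ Φ1 Φ2 hb1 hb2 hint1 hint2 hZ1 hZ2 hgt hlt

end PaperStmt
end

section
/- Let (Θ, d) be a metric space with its Borel σ-algebra, μ a probability measure on Θ, and Φ1, Φ2 : Θ → ℝ measurable with 0 < Z_{Φi,μ} < ∞ for i = 1, 2. Then: (i) for every bounded measurable f : Θ → ℝ, ∫ f dμ_{Φ1} − ∫ f dμ_{Φ2} = Z_{Φ1,μ}⁻¹ ( ∫ f (e^{−Φ1} − e^{−Φ2}) dμ + (Z_{Φ2,μ} − Z_{Φ1,μ}) ∫ f dμ_{Φ2} ). (ii) If Z_{Φ1,μ} = Z_{Φ2,μ} and g := e^{−Φ1} − e^{−Φ2} satisfies 0 < K := ‖g‖_{Lip(supp μ, d)} < ∞, then the supremum over all functions f that are 1-Lipschitz on supp μ of |∫ f dμ_{Φ1} − ∫ f dμ_{Φ2}| is at least Z_{Φ1,μ}⁻¹ ‖g‖²_{L²_μ} / K; if in addition Φ1, Φ2 are μ-essentially bounded, this supremum is at least ( min(exp(−2‖Φ1‖_{L^∞_μ}), exp(−2‖Φ2‖_{L^∞_μ}))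 / Z_{Φ1,μ} ) · ‖Φ1 − Φ2‖²_{L²_μ} / K. -/
/-!
Part (i) is algebra once `∫ f dμ_Φ = Z⁻¹ ∫ f e^{-Φ} dμ`. For (ii), when the evidences agree, the
difference of the posterior integrals of `f` is `Z⁻¹ ∫ f g dμ`; testing it against `g / K`, which is
1-Lipschitz on `supp μ`, yields `Z⁻¹ ‖g‖²_{L²} / K`. As `g / K` need not be bounded, one tests
against its truncations at level `n` and lets `n → ∞` by dominated convergence. The second bound
then follows from `|e^{-a} - e^{-b}| ≥ min (e^{-a}, e^{-b}) |a - b|`.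
-/

open MeasureTheory Real
open scoped ENNReal

namespace PaperStmt

variable {Θ : Type*}

/-- The (topological) support of a measure: the set of points all of whose open
neighbourhoods have positive measure. -/
def msupport [TopologicalSpace Θ] [MeasurableSpace Θ] (μ : Measure Θ) : Set Θ :=
  {x | ∀ U : Set Θ, IsOpen U → x ∈ U → 0 < μ U}

/-- The Lipschitz constant `‖h‖_{Lip(M,d)} ∈ [0,∞]` of `h` on the set `M`. -/
noncomputable def lipConst [PseudoMetricSpace Θ] (h : Θ → ℝ) (M : Set Θ) : ℝ≥0∞ :=
  ⨆ x ∈ M, ⨆ y ∈ M, ⨆ (_ : x ≠ y), ENNReal.ofReal (|h x - h y| / dist x y)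

open Filter
open scoped NNReal Topology

def clamp (n t : ℝ) : ℝ := max (-n) (min n t)

lemma lipschitzWith_clamp (n : ℝ) : LipschitzWith 1 (clamp n) :=
  (LipschitzWith.id.const_min n).const_max (-n)

lemma clamp_of_abs_le {n t : ℝ} (h : |t| ≤ n) : clamp n t = t := by
  rw [abs_le] at h
  rw [clamp, min_eq_right h.2, max_eq_right h.1]

lemma abs_clamp_le_abs {n : ℝ} (hn : 0 ≤ n) (t : ℝ) : |clamp n t| ≤ |t| := by
  simpa [clamp_of_abs_le (abs_zero.trans_le hn), Real.dist_eq] using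
    (lipschitzWith_clamp n).dist_le_mul t 0

lemma abs_clamp_le {n : ℝ} (hn : 0 ≤ n) (t : ℝ) : |clamp n t| ≤ n :=
  abs_le.2 ⟨le_max_left _ _, max_le (by linarith) (min_le_left _ _)⟩

lemma clamp_mul_self_nonneg {n : ℝ} (hn : 0 ≤ n) (t : ℝ) : 0 ≤ clamp n t * t := by
  unfold clamp
  rcases le_total 0 t with ht | ht
  · exact mul_nonneg (le_trans (le_min hn ht) (le_max_right _ _)) ht
  · exact mul_nonneg_of_nonpos_of_nonpos (max_le (by linarith) (min_le_of_right_le ht)) ht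

lemma tendsto_clamp (t : ℝ) : Tendsto (fun n : ℕ => clamp n t) atTop (𝓝 t) :=
  tendsto_const_nhds.congr' <| (eventually_ge_atTop ⌈|t|⌉₊).mono fun _ hn =>
    (clamp_of_abs_le (Nat.ceil_le.1 hn)).symm

lemma lipschitzOnWith_toNNReal_lipConst [MetricSpace Θ] {h : Θ → ℝ} {M : Set Θ}
    (hM : lipConst h M ≠ ⊤) : LipschitzOnWith (lipConst h M).toNNReal h M := by
  refine LipschitzOnWith.of_dist_le_mul fun x hx y hy => ?_
  rcases eq_or_ne x y with rfl | hxy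
  · simp
  have hle : ENNReal.ofReal (|h x - h y| / dist x y) ≤ lipConst h M :=
    le_iSup₂_of_le x hx (le_iSup₂_of_le y hy (le_iSup_of_le hxy le_rfl))
  rw [Real.dist_eq, ← div_le_iff₀ (dist_pos.2 hxy)]
  exact (ENNReal.ofReal_le_iff_le_toReal hM).1 hle

section Posterior

variable [MeasurableSpace Θ] {μ : Measure Θ}

theorem tendsto_integral_clamp_div_mul {g : Θ → ℝ} {c : ℝ} (hc : 0 < c)
    (hg : AEStronglyMeasurable g μ) (hg2 : Integrable (fun θ => g θ ^ 2) μ) :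
    Tendsto (fun n : ℕ => ∫ θ, clamp n (g θ / c) * g θ ∂μ) atTop
      (𝓝 ((∫ θ, g θ ^ 2 ∂μ) / c)) := by
  rw [← integral_div]
  refine tendsto_integral_of_dominated_convergence _ (fun n => ?_) (hg2.div_const c)
    (fun n => ae_of_all _ fun θ => ?_) (ae_of_all _ fun θ => ?_)
  · exact (((lipschitzWith_clamp n).continuous.comp (continuous_id.div_const c))
      |>.comp_aestronglyMeasurable hg).mul hg
  · calc ‖clamp n (g θ / c) * g θ‖ ≤ |g θ / c| * |g θ| := by
          rw [norm_mul, Real.norm_eq_abs]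
          exact mul_le_mul_of_nonneg_right (abs_clamp_le_abs n.cast_nonneg _) (abs_nonneg _)
      _ = g θ ^ 2 / c := by rw [abs_div, abs_of_pos hc, div_mul_eq_mul_div, abs_mul_abs_self, sq]
  · simpa only [div_mul_eq_mul_div, ← sq] using (tendsto_clamp (g θ / c)).mul_const (g θ)

theorem integral_post {Φ : Θ → ℝ} (hm : Measurable Φ) (f : Θ → ℝ) :
    ∫ x, f x ∂(post μ Φ) = (evid μ Φ)⁻¹ * ∫ θ, f θ * exp (-(Φ θ)) ∂μ := by
  have hZ : 0 ≤ evid μ Φ := integral_nonneg fun θ => (exp_pos _).le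
  rw [post, integral_withDensity_eq_integral_toReal_smul (by fun_prop)
    (ae_of_all _ fun _ => ENNReal.ofReal_lt_top), ← integral_const_mul]
  congr 1 with θ
  rw [ENNReal.toReal_ofReal (by positivity), smul_eq_mul]
  ring

theorem integral_post_sub_integral_post {Φ1 Φ2 : Θ → ℝ} (hm1 : Measurable Φ1)
    (hm2 : Measurable Φ2) (hint1 : Integrable (fun θ => exp (-(Φ1 θ))) μ)
    (hint2 : Integrable (fun θ => exp (-(Φ2 θ))) μ) (hZ1 : evid μ Φ1 ≠ 0)
    (hZ2 : evid μ Φ2 ≠ 0) {f : Θ → ℝ} (hf : Measurable f) (hfC : ∃ C : ℝ, ∀ x, |f x| ≤ C) :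
    (∫ x, f x ∂(post μ Φ1)) - ∫ x, f x ∂(post μ Φ2)
      = (evid μ Φ1)⁻¹ * ((∫ θ, f θ * (exp (-(Φ1 θ)) - exp (-(Φ2 θ))) ∂μ)
          + (evid μ Φ2 - evid μ Φ1) * ∫ x, f x ∂(post μ Φ2)) := by
  obtain ⟨C, hC⟩ := hfC
  have hbound : ∀ᵐ x ∂μ, ‖f x‖ ≤ C := ae_of_all _ hC
  simp_rw [mul_sub]
  rw [integral_sub (hint1.bdd_mul hf.aestronglyMeasurable hbound)
    (hint2.bdd_mul hf.aestronglyMeasurable hbound), integral_post hm1, integral_post hm2]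
  field_simp
  ring

theorem integral_post_sub_integral_post_of_evid_eq {Φ1 Φ2 : Θ → ℝ} (hm1 : Measurable Φ1)
    (hm2 : Measurable Φ2) (hint1 : Integrable (fun θ => exp (-(Φ1 θ))) μ)
    (hint2 : Integrable (fun θ => exp (-(Φ2 θ))) μ) (hZ1 : evid μ Φ1 ≠ 0)
    (hZ : evid μ Φ1 = evid μ Φ2) {f : Θ → ℝ} (hf : Measurable f)
    (hfC : ∃ C : ℝ, ∀ x, |f x| ≤ C) :
    (∫ x, f x ∂(post μ Φ1)) - ∫ x, f x ∂(post μ Φ2)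
      = (evid μ Φ1)⁻¹ * ∫ θ, f θ * (exp (-(Φ1 θ)) - exp (-(Φ2 θ))) ∂μ := by
  rw [integral_post_sub_integral_post hm1 hm2 hint1 hint2 hZ1 (hZ ▸ hZ1) hf hfC, hZ, sub_self,
    zero_mul, add_zero]

theorem ofReal_integral_sq_le_iSup_abs_integral_post_sub [PseudoMetricSpace Θ]
    {Φ1 Φ2 : Θ → ℝ} (hm1 : Measurable Φ1) (hm2 : Measurable Φ2)
    (hint1 : Integrable (fun θ => exp (-(Φ1 θ))) μ)
    (hint2 : Integrable (fun θ => exp (-(Φ2 θ))) μ) (hZ1 : 0 < evid μ Φ1)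
    (hZ : evid μ Φ1 = evid μ Φ2) {M : Set Θ} {K : ℝ≥0} (hK : 0 < K)
    (hg : LipschitzOnWith K (fun θ => exp (-(Φ1 θ)) - exp (-(Φ2 θ))) M) :
    ENNReal.ofReal ((evid μ Φ1)⁻¹ * (∫ θ, (exp (-(Φ1 θ)) - exp (-(Φ2 θ))) ^ 2 ∂μ) / K)
      ≤ ⨆ (f : Θ → ℝ) (_ : LipschitzOnWith 1 f M),
          ENNReal.ofReal |(∫ x, f x ∂(post μ Φ1)) - ∫ x, f x ∂(post μ Φ2)| := by
  set g := fun θ => exp (-(Φ1 θ)) - exp (-(Φ2 θ))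
  have hgm : Measurable g := by fun_prop
  by_cases hg2 : Integrable (fun θ => g θ ^ 2) μ
  swap
  · rw [integral_undef hg2]
    simp
  set F : ℕ → Θ → ℝ := fun n θ => clamp n (g θ / K)
  have hFlip (n : ℕ) : LipschitzOnWith 1 (F n) M := by
    refine LipschitzOnWith.of_dist_le_mul fun x hx y hy => ?_
    calc dist (F n x) (F n y) ≤ dist (g x / K) (g y / K) :=
          by simpa using (lipschitzWith_clamp n).dist_le_mul (g x / K) (g y / K)
      _ = dist (g x) (g y) / K := by rw [Real.dist_eq, Real.dist_eq, ← sub_div, abs_div,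
          abs_of_pos (NNReal.coe_pos.2 hK)]
      _ ≤ ((1 : ℝ≥0) : ℝ) * dist x y := by
          rw [NNReal.coe_one, one_mul, div_le_iff₀ (NNReal.coe_pos.2 hK), mul_comm]
          exact hg.dist_le_mul x hx y hy
  have hFdiff (n : ℕ) : (∫ x, F n x ∂(post μ Φ1)) - ∫ x, F n x ∂(post μ Φ2)
      = (evid μ Φ1)⁻¹ * ∫ θ, F n θ * g θ ∂μ :=
    integral_post_sub_integral_post_of_evid_eq hm1 hm2 hint1 hint2 hZ1.ne' hZ
      ((lipschitzWith_clamp n).continuous.measurable.comp (hgm.div_const _))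
      ⟨n, fun θ => abs_clamp_le n.cast_nonneg _⟩
  have hF_le_iSup (n : ℕ) : ENNReal.ofReal ((evid μ Φ1)⁻¹ * ∫ θ, F n θ * g θ ∂μ)
      ≤ ⨆ (f : Θ → ℝ) (_ : LipschitzOnWith 1 f M),
          ENNReal.ofReal |(∫ x, f x ∂(post μ Φ1)) - ∫ x, f x ∂(post μ Φ2)| := by
    have hFg (θ : Θ) : 0 ≤ F n θ * g θ :=
      (mul_nonneg (clamp_mul_self_nonneg n.cast_nonneg (g θ / K)) K.coe_nonneg).trans_eq
        (by simp only [F]; field_simp)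
    have hnonneg : 0 ≤ (evid μ Φ1)⁻¹ * ∫ θ, F n θ * g θ ∂μ :=
      mul_nonneg (inv_nonneg.2 hZ1.le) (integral_nonneg hFg)
    rw [← abs_of_nonneg hnonneg, ← hFdiff n]
    exact le_iSup₂_of_le (F n) (hFlip n) le_rfl
  have hlim := (tendsto_integral_clamp_div_mul (NNReal.coe_pos.2 hK) hgm.aestronglyMeasurable
    hg2).const_mul (evid μ Φ1)⁻¹
  rw [mul_div_assoc]
  exact le_of_tendsto' ((ENNReal.continuous_ofReal.tendsto _).comp hlim) hF_le_iSup

lemma exp_neg_mul_sub_le_exp_neg_sub_exp_neg (a b : ℝ) :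
    exp (-b) * (b - a) ≤ exp (-a) - exp (-b) := by
  have h : exp (-a) = exp (-b) * exp (b - a) := by rw [← exp_add]; ring_nf
  nlinarith [add_one_le_exp (b - a), exp_pos (-b)]

lemma exp_neg_two_mul_sq_sub_le {a b B : ℝ} (hab : a ≤ b) (hb : b ≤ B) :
    exp (-(2 * B)) * (a - b) ^ 2 ≤ (exp (-a) - exp (-b)) ^ 2 :=
  calc exp (-(2 * B)) * (a - b) ^ 2 ≤ (exp (-b) * (b - a)) ^ 2 := by
        rw [mul_pow, ← neg_sub a b, neg_sq, ← exp_nat_mul]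
        gcongr
        push_cast
        linarith
    _ ≤ (exp (-a) - exp (-b)) ^ 2 := by
        gcongr
        exact exp_neg_mul_sub_le_exp_neg_sub_exp_neg a b

lemma min_exp_mul_sq_sub_le {a b A B : ℝ} (ha : |a| ≤ A) (hb : |b| ≤ B) :
    min (exp (-(2 * A))) (exp (-(2 * B))) * (a - b) ^ 2 ≤ (exp (-a) - exp (-b)) ^ 2 := by
  rcases le_total a b with hab | hba
  · exact (mul_le_mul_of_nonneg_right (min_le_right _ _) (sq_nonneg _)).trans
      (exp_neg_two_mul_sq_sub_le hab ((le_abs_self b).trans hb))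
  · have h := exp_neg_two_mul_sq_sub_le hba ((le_abs_self a).trans ha)
    rw [← neg_sub b a, neg_sq, ← neg_sub (exp (-b)) (exp (-a)), neg_sq]
    exact (mul_le_mul_of_nonneg_right (min_le_left _ _) (sq_nonneg _)).trans h

lemma ae_abs_le_essSup_of_memLp_top {Φ : Θ → ℝ} (hΦ : MemLp Φ ⊤ μ) :
    ∀ᵐ θ ∂μ, |Φ θ| ≤ essSup (fun θ => |Φ θ|) μ := by
  obtain ⟨C, hC⟩ := (eLpNormEssSup_lt_top_iff_isBoundedUnder (f := Φ) (μ := μ)).1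
    (by rw [← eLpNorm_exponent_top]; exact hΦ.eLpNorm_lt_top)
  refine ae_le_essSup (f := fun θ => |Φ θ|) ⟨C, ?_⟩
  rw [eventually_map] at hC ⊢
  filter_upwards [hC] with θ hθ
  exact NNReal.coe_le_coe.2 hθ

theorem min_exp_mul_integral_sq_sub_le [IsFiniteMeasure μ] {Φ1 Φ2 : Θ → ℝ}
    (h1 : MemLp Φ1 ⊤ μ) (h2 : MemLp Φ2 ⊤ μ) :
    min (exp (-(2 * essSup (fun θ => |Φ1 θ|) μ))) (exp (-(2 * essSup (fun θ => |Φ2 θ|) μ)))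
        * (∫ θ, (Φ1 θ - Φ2 θ) ^ 2 ∂μ)
      ≤ ∫ θ, (exp (-(Φ1 θ)) - exp (-(Φ2 θ))) ^ 2 ∂μ := by
  set E1 := essSup (fun θ => |Φ1 θ|) μ
  set E2 := essSup (fun θ => |Φ2 θ|) μ
  have hb1 := ae_abs_le_essSup_of_memLp_top h1
  have hb2 := ae_abs_le_essSup_of_memLp_top h2
  have hexp_sq : Integrable (fun θ => (exp (-(Φ1 θ)) - exp (-(Φ2 θ))) ^ 2) μ := by
    refine .of_bound (((continuous_exp.comp_aestronglyMeasurable h1.1.neg).sub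
      (continuous_exp.comp_aestronglyMeasurable h2.1.neg)).pow 2) ((exp E1 + exp E2) ^ 2) ?_
    filter_upwards [hb1, hb2] with θ hθ1 hθ2
    rw [Real.norm_eq_abs, abs_pow]
    gcongr
    refine (abs_sub _ _).trans ?_
    rw [abs_exp, abs_exp]
    gcongr
    exacts [(neg_le_abs _).trans hθ1, (neg_le_abs _).trans hθ2]
  rw [← integral_const_mul]
  refine integral_mono_ae (((h1.sub h2).mono_exponent le_top).integrable_sq.const_mul _)
    hexp_sq ?_
  filter_upwards [hb1, hb2] with θ hθ1 hθ2
  exact min_exp_mul_sq_sub_le hθ1 hθ2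

end Posterior

theorem stmt18_general [MetricSpace Θ] [MeasurableSpace Θ]
    (μ : Measure Θ) [IsProbabilityMeasure μ]
    (Φ1 Φ2 : Θ → ℝ) (hm1 : Measurable Φ1) (hm2 : Measurable Φ2)
    (hint1 : Integrable (fun θ => Real.exp (-(Φ1 θ))) μ)
    (hint2 : Integrable (fun θ => Real.exp (-(Φ2 θ))) μ)
    (hZ1 : 0 < evid μ Φ1) (hZ2 : 0 < evid μ Φ2) :
    (∀ f : Θ → ℝ, Measurable f → (∃ C : ℝ, ∀ x, |f x| ≤ C) →
        (∫ x, f x ∂(post μ Φ1)) - ∫ x, f x ∂(post μ Φ2)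
          = (evid μ Φ1)⁻¹
              * ((∫ θ, f θ * (Real.exp (-(Φ1 θ)) - Real.exp (-(Φ2 θ))) ∂μ)
                  + (evid μ Φ2 - evid μ Φ1) * ∫ x, f x ∂(post μ Φ2)))
    ∧ (evid μ Φ1 = evid μ Φ2 →
        0 < lipConst (fun θ => Real.exp (-(Φ1 θ)) - Real.exp (-(Φ2 θ))) (msupport μ) →
        lipConst (fun θ => Real.exp (-(Φ1 θ)) - Real.exp (-(Φ2 θ))) (msupport μ) < ⊤ →
        (ENNReal.ofReal ((evid μ Φ1)⁻¹
              * (∫ θ, (Real.exp (-(Φ1 θ)) - Real.exp (-(Φ2 θ))) ^ 2 ∂μ)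
              / (lipConst (fun θ => Real.exp (-(Φ1 θ)) - Real.exp (-(Φ2 θ)))
                  (msupport μ)).toReal)
            ≤ ⨆ (f : Θ → ℝ) (_ : LipschitzOnWith 1 f (msupport μ)),
                ENNReal.ofReal |(∫ x, f x ∂(post μ Φ1)) - ∫ x, f x ∂(post μ Φ2)|)
        ∧ (MemLp Φ1 ⊤ μ → MemLp Φ2 ⊤ μ →
            ENNReal.ofReal
                (min (Real.exp (-(2 * essSup (fun θ => |Φ1 θ|) μ)))
                    (Real.exp (-(2 * essSup (fun θ => |Φ2 θ|) μ)))
                  / evid μ Φ1 * (∫ θ, (Φ1 θ - Φ2 θ) ^ 2 ∂μ)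
                  / (lipConst (fun θ => Real.exp (-(Φ1 θ)) - Real.exp (-(Φ2 θ)))
                      (msupport μ)).toReal)
              ≤ ⨆ (f : Θ → ℝ) (_ : LipschitzOnWith 1 f (msupport μ)),
                  ENNReal.ofReal |(∫ x, f x ∂(post μ Φ1)) - ∫ x, f x ∂(post μ Φ2)|)) := by
  refine ⟨fun f hf hfC => integral_post_sub_integral_post hm1 hm2 hint1 hint2 hZ1.ne' hZ2.ne'
    hf hfC, fun hZ hK0 hKtop => ?_⟩
  have hK := ENNReal.toNNReal_pos hK0.ne' hKtop.ne
  have hW := ofReal_integral_sq_le_iSup_abs_integral_post_sub hm1 hm2 hint1 hint2 hZ1 hZ hK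
    (lipschitzOnWith_toNNReal_lipConst hKtop.ne)
  rw [ENNReal.coe_toNNReal_eq_toReal] at hW
  refine ⟨hW, fun h1 h2 => le_trans (ENNReal.ofReal_le_ofReal ?_) hW⟩
  rw [div_mul_eq_mul_div, div_eq_inv_mul (_ * _) (evid μ Φ1)]
  gcongr
  exact min_exp_mul_integral_sq_sub_le h1 h2

/-- (i) an exact identity for `∫ f dμ_{Φ1} - ∫ f dμ_{Φ2}` for bounded measurable `f`;
(ii) if `Z_{Φ1,μ} = Z_{Φ2,μ}` and `g := e^{-Φ1} - e^{-Φ2}` has Lipschitz constant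
`K ∈ (0,∞)` on `supp μ`, lower bounds for the supremum of
`|∫ f dμ_{Φ1} - ∫ f dμ_{Φ2}|` over functions `f` that are 1-Lipschitz on `supp μ`. -/
theorem stmt18 [MetricSpace Θ] [MeasurableSpace Θ] [BorelSpace Θ]
    (μ : Measure Θ) [IsProbabilityMeasure μ]
    (Φ1 Φ2 : Θ → ℝ) (hm1 : Measurable Φ1) (hm2 : Measurable Φ2)
    (hint1 : Integrable (fun θ => Real.exp (-(Φ1 θ))) μ)
    (hint2 : Integrable (fun θ => Real.exp (-(Φ2 θ))) μ)
    (hZ1 : 0 < evid μ Φ1) (hZ2 : 0 < evid μ Φ2) :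
    (∀ f : Θ → ℝ, Measurable f → (∃ C : ℝ, ∀ x, |f x| ≤ C) →
        (∫ x, f x ∂(post μ Φ1)) - ∫ x, f x ∂(post μ Φ2)
          = (evid μ Φ1)⁻¹
              * ((∫ θ, f θ * (Real.exp (-(Φ1 θ)) - Real.exp (-(Φ2 θ))) ∂μ)
                  + (evid μ Φ2 - evid μ Φ1) * ∫ x, f x ∂(post μ Φ2)))
    ∧ (evid μ Φ1 = evid μ Φ2 →
        0 < lipConst (fun θ => Real.exp (-(Φ1 θ)) - Real.exp (-(Φ2 θ))) (msupport μ) →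
        lipConst (fun θ => Real.exp (-(Φ1 θ)) - Real.exp (-(Φ2 θ))) (msupport μ) < ⊤ →
        (ENNReal.ofReal ((evid μ Φ1)⁻¹
              * (∫ θ, (Real.exp (-(Φ1 θ)) - Real.exp (-(Φ2 θ))) ^ 2 ∂μ)
              / (lipConst (fun θ => Real.exp (-(Φ1 θ)) - Real.exp (-(Φ2 θ)))
                  (msupport μ)).toReal)
            ≤ ⨆ (f : Θ → ℝ) (_ : LipschitzOnWith 1 f (msupport μ)),
                ENNReal.ofReal |(∫ x, f x ∂(post μ Φ1)) - ∫ x, f x ∂(post μ Φ2)|)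
        ∧ (MemLp Φ1 ⊤ μ → MemLp Φ2 ⊤ μ →
            ENNReal.ofReal
                (min (Real.exp (-(2 * essSup (fun θ => |Φ1 θ|) μ)))
                    (Real.exp (-(2 * essSup (fun θ => |Φ2 θ|) μ)))
                  / evid μ Φ1 * (∫ θ, (Φ1 θ - Φ2 θ) ^ 2 ∂μ)
                  / (lipConst (fun θ => Real.exp (-(Φ1 θ)) - Real.exp (-(Φ2 θ)))
                      (msupport μ)).toReal)
              ≤ ⨆ (f : Θ → ℝ) (_ : LipschitzOnWith 1 f (msupport μ)),
                  ENNReal.ofReal |(∫ x, f x ∂(post μ Φ1)) - ∫ x, f x ∂(post μ Φ2)|)) :=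
  stmt18_general μ Φ1 Φ2 hm1 hm2 hint1 hint2 hZ1 hZ2
end PaperStmt
end
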